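/- Let ρ and ρ* be CQ states on alphabet X, Π = Σ_{x∈S}|x⟩⟨x| with p = Tr(ΠρΠ) > 0 and p* = Tr(Πρ*Π) > 0, and define the normalized projected states τ = p⁻¹ΠρΠ and τ* = p*⁻¹Πρ*Π. Then D(τ, τ*) ≤ 2 p⁻¹ D(ρ, ρ*). In particular, if D(ρ,ρ*) ≤ p ε²/4 then D(τ,τ*) ≤ ε²/2. -/

import Mathlib

open Matrix Kronecker
open scoped BigOperators ComplexOrder

/-- |M| = √(M†M) for a square complex matrix. -/
noncomputable def matAbs {n : Type*} [Fintype n] [DecidableEq n] (M : Matrix n n ℂ) :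
    Matrix n n ℂ :=
  ((Matrix.posSemidef_conjTranspose_mul_self M).1.eigenvectorUnitary : Matrix n n ℂ) *
    diagonal (fun i => ((Real.sqrt ((Matrix.posSemidef_conjTranspose_mul_self M).1.eigenvalues i) : ℝ) : ℂ)) *
    (star (Matrix.posSemidef_conjTranspose_mul_self M).1.eigenvectorUnitary : Matrix n n ℂ)

/-- Trace distance D(A,B) = (1/2) Tr |A - B|. -/
noncomputable def traceDist {n : Type*} [Fintype n] [DecidableEq n]
    (A B : Matrix n n ℂ) : ℝ :=
  (matAbs (A - B)).trace.re / 2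

/-- A density operator: positive semidefinite with unit trace. -/
def IsDensity {n : Type*} [Fintype n] [DecidableEq n] (ρ : Matrix n n ℂ) : Prop :=
  ρ.PosSemidef ∧ ρ.trace = 1

/-- The CQ state Σ_x P(x) |x⟩⟨x| ⊗ ω(x). -/
noncomputable def cqState {X E : Type*} [Fintype X] [DecidableEq X] [Fintype E] [DecidableEq E]
    (P : X → ℝ) (ω : X → Matrix E E ℂ) : Matrix (X × E) (X × E) ℂ :=
  ∑ x, (P x : ℂ) • (Matrix.single x x (1 : ℂ) ⊗ₖ ω x)

/-- The projector Π = Σ_{x∈S} |x⟩⟨x| ⊗ 1_E. -/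
noncomputable def cqProj {X E : Type*} [Fintype X] [DecidableEq X] [Fintype E] [DecidableEq E]
    (S : Finset X) : Matrix (X × E) (X × E) ℂ :=
  ∑ x ∈ S, Matrix.single x x (1 : ℂ) ⊗ₖ (1 : Matrix E E ℂ)

/-!
On Hermitian matrices the trace norm `‖M‖₁ = Tr |M|` is dual to the operator norm: writing
`M = U diag(λ) U*`, `Tr (M C) = ∑ λᵢ (U* C U)ᵢᵢ` has modulus at most `∑ |λᵢ| = ‖M‖₁` when
`‖C‖ ≤ 1`, with equality for `C = U diag(sign λ) U*`. This gives the triangle inequality,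
`‖K M Kᴴ‖₁ ≤ ‖M‖₁` and `|Tr (K M Kᴴ)| ≤ ‖M‖₁` for every `K` with `‖K‖ ≤ 1`.

With `Π` the projector, `τ - τ* = p⁻¹ Π(ρ - ρ*)Π + (p⁻¹ - p*⁻¹) Πρ*Π`. The first term has trace
norm at most `p⁻¹ ‖ρ - ρ*‖₁`; the second is a real multiple of the positive matrix `Πρ*Π`, so
its trace norm is `|p⁻¹ - p*⁻¹| p* = |p* - p| / p`, and `|p* - p| = |Tr Π(ρ - ρ*)Π| ≤ ‖ρ - ρ*‖₁`.
-/

open scoped Matrix.Norms.L2Operator MatrixOrder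

namespace Matrix

variable {m n : Type*} [Fintype m] [Fintype n] [DecidableEq n]

lemma norm_apply_self_le (A : Matrix n n ℂ) (i : n) : ‖A i i‖ ≤ ‖A‖ :=
  calc ‖A i i‖ = ‖((EuclideanSpace.equiv n ℂ).symm (A *ᵥ EuclideanSpace.single i 1)) i‖ := by
        simp [mulVec_single]
    _ ≤ ‖(EuclideanSpace.equiv n ℂ).symm (A *ᵥ EuclideanSpace.single i 1)‖ :=
        PiLp.norm_apply_le _ _
    _ ≤ ‖A‖ * ‖EuclideanSpace.single i (1 : ℂ)‖ := l2_opNorm_mulVec _ _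
    _ = ‖A‖ := by simp

lemma norm_mul_mul_conjTranspose_le [DecidableEq m] {K : Matrix m n ℂ} (hK : ‖K‖ ≤ 1)
    (C : Matrix n n ℂ) : ‖K * C * Kᴴ‖ ≤ ‖C‖ :=
  calc ‖K * C * Kᴴ‖ ≤ ‖K‖ * ‖C‖ * ‖Kᴴ‖ :=
        (l2_opNorm_mul _ _).trans (mul_le_mul_of_nonneg_right (l2_opNorm_mul _ _) (norm_nonneg _))
    _ ≤ 1 * ‖C‖ * 1 := by rw [l2_opNorm_conjTranspose]; gcongr
    _ = ‖C‖ := by ring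

lemma matAbs_eq_cfcAbs (M : Matrix n n ℂ) : matAbs M = CFC.abs M := by
  have h0 : (0 : Matrix n n ℂ) ≤ Mᴴ * M := (posSemidef_conjTranspose_mul_self M).nonneg
  rw [CFC.abs, star_eq_conjTranspose, CFC.sqrt_eq_real_sqrt _ h0, cfcₙ_eq_cfc,
    (posSemidef_conjTranspose_mul_self M).1.cfc_eq, IsHermitian.cfc, Unitary.conjStarAlgAut_apply]
  simp [matAbs, Function.comp_def]

noncomputable def traceNorm (M : Matrix n n ℂ) : ℝ := (CFC.abs M).trace.re

lemma traceDist_eq_traceNorm_sub (A B : Matrix n n ℂ) :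
    traceDist A B = traceNorm (A - B) / 2 := by
  rw [traceDist, traceNorm, matAbs_eq_cfcAbs]

lemma traceNorm_smul (c : ℂ) (M : Matrix n n ℂ) : traceNorm (c • M) = ‖c‖ * traceNorm M := by
  simp [traceNorm, CFC.abs_smul, trace_smul]

lemma PosSemidef.traceNorm_eq {M : Matrix n n ℂ} (hM : M.PosSemidef) :
    traceNorm M = M.trace.re := by
  rw [traceNorm, CFC.abs_of_nonneg M hM.nonneg]

lemma IsHermitian.trace_mul_eq_sum {M : Matrix n n ℂ} (hM : M.IsHermitian) (C : Matrix n n ℂ) :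
    (M * C).trace = ∑ i, (hM.eigenvalues i : ℂ) *
      (star (hM.eigenvectorUnitary : Matrix n n ℂ) * C * hM.eigenvectorUnitary) i i := by
  conv_lhs => rw [hM.spectral_theorem, Unitary.conjStarAlgAut_apply]
  rw [Matrix.mul_assoc, trace_mul_cycle]
  simp [trace, mul_diagonal, mul_comm]

lemma IsHermitian.traceNorm_eq_sum_abs_eigenvalues {M : Matrix n n ℂ} (hM : M.IsHermitian) :
    traceNorm M = ∑ i, |hM.eigenvalues i| := by
  rw [traceNorm, CFC.abs_eq_cfc_norm M hM.isSelfAdjoint, hM.cfc_eq, IsHermitian.cfc,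
    Unitary.conjStarAlgAut_apply, trace_mul_cycle]
  simp [trace, Complex.re_sum]

lemma IsHermitian.norm_trace_mul_le_traceNorm {M : Matrix n n ℂ} (hM : M.IsHermitian)
    {C : Matrix n n ℂ} (hC : ‖C‖ ≤ 1) : ‖(M * C).trace‖ ≤ traceNorm M := by
  set U : unitary (Matrix n n ℂ) := hM.eigenvectorUnitary
  rw [hM.trace_mul_eq_sum, hM.traceNorm_eq_sum_abs_eigenvalues]
  refine (norm_sum_le _ _).trans (Finset.sum_le_sum fun i _ => ?_)
  have hentry : ‖(star (U : Matrix n n ℂ) * C * U) i i‖ ≤ 1 := by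
    refine (norm_apply_self_le _ i).trans ?_
    rwa [← Unitary.coe_star, CStarRing.norm_mul_coe_unitary, CStarRing.norm_coe_unitary_mul]
  rw [norm_mul, Complex.norm_real, Real.norm_eq_abs]
  exact mul_le_of_le_one_right (abs_nonneg _) hentry

lemma IsHermitian.exists_trace_mul_eq_traceNorm {M : Matrix n n ℂ} (hM : M.IsHermitian) :
    ∃ C : Matrix n n ℂ, ‖C‖ ≤ 1 ∧ (M * C).trace = traceNorm M := by
  set U : unitary (Matrix n n ℂ) := hM.eigenvectorUnitary
  set s : n → ℂ := fun i => if 0 ≤ hM.eigenvalues i then 1 else -1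
  refine ⟨U * diagonal s * star (U : Matrix n n ℂ), ?_, ?_⟩
  · rw [← Unitary.coe_star, CStarRing.norm_mul_coe_unitary, CStarRing.norm_coe_unitary_mul,
      l2_opNorm_diagonal]
    exact pi_norm_le_iff_of_nonneg zero_le_one |>.mpr fun i => by dsimp [s]; split_ifs <;> simp
  · have hconj : star (U : Matrix n n ℂ) * (U * diagonal s * star (U : Matrix n n ℂ)) * U =
        diagonal s := by
      simp only [← Matrix.mul_assoc, Unitary.coe_star_mul_self, one_mul]
      rw [Matrix.mul_assoc, Unitary.coe_star_mul_self, mul_one]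
    rw [hM.trace_mul_eq_sum, hconj, hM.traceNorm_eq_sum_abs_eigenvalues]
    push_cast
    refine Finset.sum_congr rfl fun i _ => ?_
    by_cases h : 0 ≤ hM.eigenvalues i
    · simp [s, h, abs_of_nonneg h]
    · simp [s, h, abs_of_neg (not_le.mp h)]

lemma IsHermitian.traceNorm_add_le {A B : Matrix n n ℂ} (hA : A.IsHermitian)
    (hB : B.IsHermitian) : traceNorm (A + B) ≤ traceNorm A + traceNorm B := by
  obtain ⟨C, hC, hAB⟩ := (hA.add hB).exists_trace_mul_eq_traceNorm
  have h := congrArg Complex.re hAB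
  rw [Complex.ofReal_re, add_mul, trace_add, Complex.add_re] at h
  rw [← h]
  exact add_le_add ((Complex.re_le_norm _).trans (hA.norm_trace_mul_le_traceNorm hC))
    ((Complex.re_le_norm _).trans (hB.norm_trace_mul_le_traceNorm hC))

lemma IsHermitian.traceNorm_mul_mul_conjTranspose_le [DecidableEq m] {M : Matrix n n ℂ}
    (hM : M.IsHermitian) {K : Matrix m n ℂ} (hK : ‖K‖ ≤ 1) :
    traceNorm (K * M * Kᴴ) ≤ traceNorm M := by
  obtain ⟨C, hC, hKMK⟩ := (isHermitian_mul_mul_conjTranspose K hM).exists_trace_mul_eq_traceNorm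
  have hcycle : (K * M * Kᴴ * C).trace = (M * (Kᴴ * C * K)).trace := by
    simp only [Matrix.mul_assoc]
    rw [trace_mul_comm K]
    simp only [Matrix.mul_assoc]
  have h := congrArg Complex.re hKMK
  rw [Complex.ofReal_re, hcycle] at h
  rw [← h]
  refine (Complex.re_le_norm _).trans (hM.norm_trace_mul_le_traceNorm ?_)
  simpa using norm_mul_mul_conjTranspose_le (K := Kᴴ) (by rwa [l2_opNorm_conjTranspose]) C
    |>.trans hC

lemma IsHermitian.norm_trace_mul_mul_conjTranspose_le {M : Matrix n n ℂ} (hM : M.IsHermitian)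
    {K : Matrix m n ℂ} (hK : ‖K‖ ≤ 1) : ‖(K * M * Kᴴ).trace‖ ≤ traceNorm M := by
  rw [Matrix.mul_assoc, trace_mul_comm, Matrix.mul_assoc]
  refine hM.norm_trace_mul_le_traceNorm ?_
  rw [l2_opNorm_conjTranspose_mul_self]
  exact mul_le_one₀ hK (norm_nonneg _) hK

theorem IsHermitian.traceNorm_normalized_compression_sub_le [DecidableEq m]
    {ρ σ : Matrix n n ℂ} (hρ : ρ.IsHermitian) (hσ : σ.PosSemidef) {K : Matrix m n ℂ}
    (hK : ‖K‖ ≤ 1) {p q : ℝ} (hp : (K * ρ * Kᴴ).trace.re = p) (hq : (K * σ * Kᴴ).trace.re = q)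
    (hp0 : 0 < p) (hq0 : 0 < q) :
    traceNorm ((p : ℂ)⁻¹ • (K * ρ * Kᴴ) - (q : ℂ)⁻¹ • (K * σ * Kᴴ)) ≤
      2 * p⁻¹ * traceNorm (ρ - σ) := by
  have hdiff : (ρ - σ).IsHermitian := hρ.sub hσ.isHermitian
  have hgap : |q - p| ≤ traceNorm (ρ - σ) := by
    have h : (K * (ρ - σ) * Kᴴ).trace.re = p - q := by
      rw [Matrix.mul_sub, Matrix.sub_mul, trace_sub, Complex.sub_re, hp, hq]
    rw [abs_sub_comm, ← h]
    exact (Complex.abs_re_le_norm _).trans (hdiff.norm_trace_mul_mul_conjTranspose_le hK)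
  have hweight : |p⁻¹ - q⁻¹| * q = |q - p| * p⁻¹ := by
    rw [_root_.inv_sub_inv hp0.ne' hq0.ne', abs_div, abs_of_pos (mul_pos hp0 hq0)]
    field_simp
  have hsplit : (p : ℂ)⁻¹ • (K * ρ * Kᴴ) - (q : ℂ)⁻¹ • (K * σ * Kᴴ) =
      ((p⁻¹ : ℝ) : ℂ) • (K * (ρ - σ) * Kᴴ) + ((p⁻¹ - q⁻¹ : ℝ) : ℂ) • (K * σ * Kᴴ) := by
    push_cast
    rw [Matrix.mul_sub, Matrix.sub_mul, smul_sub, sub_smul]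
    abel
  rw [hsplit]
  calc _ ≤ traceNorm (((p⁻¹ : ℝ) : ℂ) • (K * (ρ - σ) * Kᴴ)) +
          traceNorm (((p⁻¹ - q⁻¹ : ℝ) : ℂ) • (K * σ * Kᴴ)) :=
        ((isHermitian_mul_mul_conjTranspose K hdiff).smul (Complex.conj_ofReal _)).traceNorm_add_le
          ((isHermitian_mul_mul_conjTranspose K hσ.isHermitian).smul (Complex.conj_ofReal _))
    _ = p⁻¹ * traceNorm (K * (ρ - σ) * Kᴴ) + |q - p| * p⁻¹ := by
        rw [traceNorm_smul, traceNorm_smul, (hσ.mul_mul_conjTranspose_same K).traceNorm_eq, hq,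
          Complex.norm_real, Complex.norm_real, Real.norm_eq_abs, Real.norm_eq_abs,
          abs_of_pos (inv_pos.mpr hp0), hweight]
    _ ≤ p⁻¹ * traceNorm (ρ - σ) + traceNorm (ρ - σ) * p⁻¹ := by
        gcongr
        exact hdiff.traceNorm_mul_mul_conjTranspose_le hK
    _ = 2 * p⁻¹ * traceNorm (ρ - σ) := by ring

end Matrix

section CQ

variable {X E : Type*} [Fintype X] [DecidableEq X] [Fintype E] [DecidableEq E]

lemma cqProj_eq_diagonal (S : Finset X) :
    cqProj (E := E) S = diagonal (fun q : X × E => if q.1 ∈ S then 1 else 0) := by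
  ext ⟨a, b⟩ ⟨c, d⟩
  by_cases hac : a = c
  · subst hac
    by_cases hbd : b = d <;> simp [cqProj, Matrix.sum_apply, single_apply, hbd]
  · simp only [cqProj, Matrix.sum_apply, kroneckerMap_apply, single_apply,
      diagonal_apply, Prod.mk.injEq, hac, false_and, if_false]
    exact Finset.sum_eq_zero fun x _ => by rw [if_neg fun h => hac (h.1.symm.trans h.2), zero_mul]

lemma isStarProjection_cqProj (S : Finset X) : IsStarProjection (cqProj (E := E) S) := by
  rw [cqProj_eq_diagonal]
  constructor
  · rw [IsIdempotentElem, diagonal_mul_diagonal]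
    congr 1; ext q; split_ifs <;> simp
  · rw [IsSelfAdjoint, star_eq_conjTranspose, diagonal_conjTranspose]
    congr 1; ext q; split_ifs <;> simp_all

lemma cqState_posSemidef {P : X → ℝ} (hP : ∀ x, 0 ≤ P x) {ω : X → Matrix E E ℂ}
    (hω : ∀ x, (ω x).PosSemidef) : (cqState P ω).PosSemidef := by
  refine posSemidef_sum _ fun x _ => PosSemidef.smul ?_ (by exact_mod_cast hP x)
  rw [← diagonal_single]
  refine PosSemidef.kronecker (posSemidef_diagonal_iff.mpr fun y => ?_) (hω x)
  by_cases h : y = x <;> simp [h]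

end CQ

theorem projection_trace_distance_general
    {X E : Type*} [Fintype X] [DecidableEq X] [Fintype E] [DecidableEq E]
    (P Ps : X → ℝ) (hP : ∀ x, 0 ≤ P x) (hPs : ∀ x, 0 ≤ Ps x)
    (ω ωs : X → Matrix E E ℂ)
    (hω : ∀ x, IsDensity (ω x)) (hωs : ∀ x, IsDensity (ωs x))
    (S : Finset X) (p ps : ℝ)
    (hp : p = (cqProj (E := E) S * cqState P ω * cqProj (E := E) S).trace.re)
    (hps : ps = (cqProj (E := E) S * cqState Ps ωs * cqProj (E := E) S).trace.re)
    (hppos : 0 < p) (hpspos : 0 < ps)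
    (τ τs : Matrix (X × E) (X × E) ℂ)
    (hτ : τ = (p : ℂ)⁻¹ • (cqProj (E := E) S * cqState P ω * cqProj (E := E) S))
    (hτs : τs = (ps : ℂ)⁻¹ • (cqProj (E := E) S * cqState Ps ωs * cqProj (E := E) S)) :
    traceDist τ τs ≤ 2 * p⁻¹ * traceDist (cqState P ω) (cqState Ps ωs) ∧
    ∀ ε : ℝ, traceDist (cqState P ω) (cqState Ps ωs) ≤ p * ε ^ 2 / 4 →
      traceDist τ τs ≤ ε ^ 2 / 2 := by
  have hproj : IsStarProjection (cqProj (E := E) S) := isStarProjection_cqProj S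
  have hprojH : (cqProj (E := E) S)ᴴ = cqProj S := hproj.isSelfAdjoint
  have hρ := cqState_posSemidef hP fun x => (hω x).1
  have hσ := cqState_posSemidef hPs fun x => (hωs x).1
  have hbound := hρ.isHermitian.traceNorm_normalized_compression_sub_le hσ
    (IsStarProjection.norm_le _ hproj) (by rw [hprojH, hp]) (by rw [hprojH, hps]) hppos hpspos
  rw [hprojH, ← hτ, ← hτs] at hbound
  have hmain : traceDist τ τs ≤ 2 * p⁻¹ * traceDist (cqState P ω) (cqState Ps ωs) := by
    rw [traceDist_eq_traceNorm_sub, traceDist_eq_traceNorm_sub]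
    linarith
  refine ⟨hmain, fun ε hε => hmain.trans ?_⟩
  calc 2 * p⁻¹ * traceDist (cqState P ω) (cqState Ps ωs) ≤ 2 * p⁻¹ * (p * ε ^ 2 / 4) := by
        gcongr
    _ = ε ^ 2 / 2 := by field_simp; ring

/-- For CQ states ρ, ρ* with normalized projections τ = p⁻¹ΠρΠ and τ* = p*⁻¹Πρ*Π,
D(τ, τ*) ≤ 2 p⁻¹ D(ρ, ρ*); in particular, if D(ρ,ρ*) ≤ p ε²/4 then D(τ,τ*) ≤ ε²/2. -/
theorem projection_trace_distance
    {X E : Type*} [Fintype X] [DecidableEq X] [Fintype E] [DecidableEq E]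
    (P Ps : X → ℝ) (hP : ∀ x, 0 ≤ P x) (hPs : ∀ x, 0 ≤ Ps x)
    (hP1 : ∑ x, P x = 1) (hPs1 : ∑ x, Ps x = 1)
    (ω ωs : X → Matrix E E ℂ)
    (hω : ∀ x, IsDensity (ω x)) (hωs : ∀ x, IsDensity (ωs x))
    (S : Finset X) (p ps : ℝ)
    (hp : p = (cqProj (E := E) S * cqState P ω * cqProj (E := E) S).trace.re)
    (hps : ps = (cqProj (E := E) S * cqState Ps ωs * cqProj (E := E) S).trace.re)
    (hppos : 0 < p) (hpspos : 0 < ps)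
    (τ τs : Matrix (X × E) (X × E) ℂ)
    (hτ : τ = (p : ℂ)⁻¹ • (cqProj (E := E) S * cqState P ω * cqProj (E := E) S))
    (hτs : τs = (ps : ℂ)⁻¹ • (cqProj (E := E) S * cqState Ps ωs * cqProj (E := E) S)) :
    traceDist τ τs ≤ 2 * p⁻¹ * traceDist (cqState P ω) (cqState Ps ωs) ∧
    ∀ ε : ℝ, traceDist (cqState P ω) (cqState Ps ωs) ≤ p * ε ^ 2 / 4 →
      traceDist τ τs ≤ ε ^ 2 / 2 :=
  projection_trace_distance_general P Ps hP hPs ω ωs hω hωs S p ps hp hps hppos hpspos τ τs hτ hτs
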